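/- A topological space X is normal if and only if for any two disjoint closed sets A and B there exist disjoint Q*g-open sets U and V with A ⊆ U and B ⊆ V. -/

import Mathlib

open Set Topology

def QStarClosed {X : Type*} [TopologicalSpace X] (A : Set X) : Prop :=
  IsClosed A ∧ interior A = ∅

def QStarOpen {X : Type*} [TopologicalSpace X] (A : Set X) : Prop :=
  QStarClosed Aᶜ

def GClosed {X : Type*} [TopologicalSpace X] (A : Set X) : Prop :=
  ∀ U : Set X, IsOpen U → A ⊆ U → closure A ⊆ U

def QStarGClosed {X : Type*} [TopologicalSpace X] (A : Set X) : Prop :=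
  ∀ U : Set X, QStarOpen U → A ⊆ U → closure A ⊆ U

def QStarGOpen {X : Type*} [TopologicalSpace X] (A : Set X) : Prop :=
  QStarGClosed Aᶜ

def QStarNormal (X : Type*) [TopologicalSpace X] : Prop :=
  ∀ A B : Set X, QStarClosed A → QStarClosed B → Disjoint A B →
    ∃ U V : Set X, IsOpen U ∧ IsOpen V ∧ A ⊆ U ∧ B ⊆ V ∧ Disjoint U V

def NormalSp (X : Type*) [TopologicalSpace X] : Prop :=
  ∀ A B : Set X, IsClosed A → IsClosed B → Disjoint A B →
    ∃ U V : Set X, IsOpen U ∧ IsOpen V ∧ A ⊆ U ∧ B ⊆ V ∧ Disjoint U V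

def GNormal (X : Type*) [TopologicalSpace X] : Prop :=
  ∀ A B : Set X, GClosed A → GClosed B → Disjoint A B →
    ∃ U V : Set X, IsOpen U ∧ IsOpen V ∧ A ⊆ U ∧ B ⊆ V ∧ Disjoint U V

/-! A closed set `A` inside a Q*g-open set `U` lies in `interior U`: the frontier of `A` is
Q*-closed, so `closure Uᶜ`, which misses `A`'s frontier, meets `A` only inside `interior A`,
and `interior A ⊆ interior U`. Hence the interiors of the separating Q*g-open sets are
separating open sets. -/

theorem IsOpen.qStarGOpen {X : Type*} [TopologicalSpace X] {U : Set X} (hU : IsOpen U) :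
    QStarGOpen U := fun _ _ hsub => by
  rwa [hU.isClosed_compl.closure_eq]

theorem IsClosed.qStarOpen_compl_frontier {X : Type*} [TopologicalSpace X] {A : Set X}
    (hA : IsClosed A) : QStarOpen (frontier A)ᶜ := by
  rw [QStarOpen, compl_compl]
  exact ⟨isClosed_frontier, interior_frontier hA⟩

theorem QStarGOpen.subset_interior {X : Type*} [TopologicalSpace X] {U A : Set X}
    (hU : QStarGOpen U) (hA : IsClosed A) (hAU : A ⊆ U) : A ⊆ interior U := by
  have hfront : closure Uᶜ ⊆ (frontier A)ᶜ :=
    hU _ hA.qStarOpen_compl_frontier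
      ((compl_subset_compl.2 hAU).trans (compl_subset_compl.2 hA.frontier_subset))
  intro x hxA
  by_cases hx : x ∈ interior A
  · exact interior_mono hAU hx
  · have hxU : x ∉ closure Uᶜ := fun h => hfront h ⟨hA.closure_eq.symm ▸ hxA, hx⟩
    rwa [closure_compl, mem_compl_iff, not_not] at hxU

theorem stmt15 {X : Type*} [TopologicalSpace X] :
    NormalSp X ↔
      ∀ A B : Set X, IsClosed A → IsClosed B → Disjoint A B →
        ∃ U V : Set X, QStarGOpen U ∧ QStarGOpen V ∧ A ⊆ U ∧ B ⊆ V ∧ Disjoint U V := by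
  constructor
  · intro hX A B hA hB hAB
    obtain ⟨U, V, hU, hV, hAU, hBV, hUV⟩ := hX A B hA hB hAB
    exact ⟨U, V, hU.qStarGOpen, hV.qStarGOpen, hAU, hBV, hUV⟩
  · intro hX A B hA hB hAB
    obtain ⟨U, V, hU, hV, hAU, hBV, hUV⟩ := hX A B hA hB hAB
    exact ⟨interior U, interior V, isOpen_interior, isOpen_interior,
      hU.subset_interior hA hAU, hV.subset_interior hB hBV,
      hUV.mono interior_subset interior_subset⟩
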